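/- Let ℓ ≥ 0 be an integer, set ρ_j = ℓ/2 + 1 − j for j = 1,…,ℓ+1, and define the Baxter kernel Q(x,y|s) = 2^{ℓ+1} exp( Σ_{j=1}^{ℓ+1}(is − ρ_j)(x_j − y_j) − π Σ_{k=1}^{ℓ}( e^{2(x_k−y_k)} + e^{2(y_{k+1}−x_k)} ) − π e^{2(x_{ℓ+1}−y_{ℓ+1})} ) for x, y ∈ ℝ^{ℓ+1} and s ∈ ℂ. Then for all s, s' ∈ ℂ and all x, y ∈ ℝ^{ℓ+1} both iterated kernels converge absolutely and ∫_{ℝ^{ℓ+1}} Q(x,z|s) Q(z,y|s') dz = ∫_{ℝ^{ℓ+1}} Q(x,z|s') Q(z,y|s) dz; that is, the Baxter integral operators Q(s) and Q(s') commute. -/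

import Mathlib

open MeasureTheory

/-! The composed kernel factorises: `Q(x,z|s) Q(z,y|s')` is a prefactor depending on `x, y`
times `∏ⱼ exp (i(s'-s) zⱼ - π βⱼ e^{2zⱼ} - π αⱼ e^{-2zⱼ})` with `αⱼ, βⱼ > 0` depending on `x, y`,
so it is integrable. The reflection `zⱼ ↦ cⱼ - zⱼ` with `e^{2cⱼ} = αⱼ / βⱼ` exchanges the two
exponential terms, turns `i(s'-s)` into `i(s-s')` and produces the factor `exp (i(s'-s) Σ cⱼ)`;
since `∏ⱼ αⱼ / βⱼ = exp (2 Σ (xⱼ + yⱼ))`, this factor exactly exchanges `s` and `s'` in the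
prefactor. So the measure-preserving map `z ↦ c - z` carries one integrand to the other. -/

/-- The integral kernel of the Baxter `Q`-operator for the quantum
`gl_{ℓ+1}`-Toda chain:
`Q(x,y|s) = 2^{ℓ+1} exp(Σ_j (is−ρ_j)(x_j−y_j)
  − π Σ_{k=1}^{ℓ}(e^{2(x_k−y_k)} + e^{2(y_{k+1}−x_k)}) − π e^{2(x_{ℓ+1}−y_{ℓ+1})})`,
with `ρ_j = ℓ/2 + 1 − j`. -/
noncomputable def baxterKernel (ℓ : ℕ) (x y : Fin (ℓ+1) → ℝ) (s : ℂ) : ℂ :=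
  2 ^ (ℓ+1) *
    Complex.exp ((∑ j : Fin (ℓ+1),
        (Complex.I * s - ((ℓ : ℂ)/2 + 1 - ((j : ℕ) + 1))) * ((x j - y j : ℝ) : ℂ))
      - (Real.pi : ℂ) * ∑ k : Fin ℓ,
          ((Real.exp (2 * (x k.castSucc - y k.castSucc)) : ℂ)
            + (Real.exp (2 * (y k.succ - x k.castSucc)) : ℂ))
      - (Real.pi : ℂ) * (Real.exp (2 * (x (Fin.last ℓ) - y (Fin.last ℓ))) : ℂ))

noncomputable def macdonaldIntegrand (μ : ℂ) (a b t : ℝ) : ℂ :=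
  Complex.exp (μ * t - ((a * Real.exp (2 * t) + b * Real.exp (-(2 * t)) : ℝ) : ℂ))

lemma norm_macdonaldIntegrand (μ : ℂ) (a b t : ℝ) :
    ‖macdonaldIntegrand μ a b t‖
      = Real.exp (μ.re * t - (a * Real.exp (2 * t) + b * Real.exp (-(2 * t)))) := by
  rw [macdonaldIntegrand, Complex.norm_exp, Complex.sub_re, Complex.ofReal_re, Complex.re_mul_ofReal]

lemma two_mul_min_mul_sq_le {a b : ℝ} (ha : 0 ≤ a) (hb : 0 ≤ b) (t : ℝ) :
    2 * min a b * t ^ 2 ≤ a * Real.exp (2 * t) + b * Real.exp (-(2 * t)) := by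
  have hea := Real.exp_pos (2 * t)
  have heb := Real.exp_pos (-(2 * t))
  rcases le_total 0 t with ht | ht
  · have h := Real.quadratic_le_exp_of_nonneg (by linarith : 0 ≤ 2 * t)
    nlinarith [min_le_left a b, le_min ha hb, mul_le_mul_of_nonneg_left h ha]
  · have h := Real.quadratic_le_exp_of_nonneg (by linarith : 0 ≤ -(2 * t))
    nlinarith [min_le_right a b, le_min ha hb, mul_le_mul_of_nonneg_left h hb]

lemma integrable_macdonaldIntegrand (μ : ℂ) {a b : ℝ} (ha : 0 < a) (hb : 0 < b) :
    Integrable (macdonaldIntegrand μ a b) := by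
  have hg := integrable_cexp_quadratic (b := ((2 * min a b : ℝ) : ℂ))
    (by simpa using lt_min ha hb) μ 0
  refine hg.mono (by unfold macdonaldIntegrand; fun_prop) (ae_of_all _ fun t => ?_)
  rw [norm_macdonaldIntegrand, Complex.norm_exp, Real.exp_le_exp, ← Complex.ofReal_pow,
    ← Complex.ofReal_neg, ← Complex.ofReal_mul]
  simp only [add_zero, Complex.add_re, Complex.ofReal_re, Complex.re_mul_ofReal]
  linarith [two_mul_min_mul_sq_le ha.le hb.le t]

lemma macdonaldIntegrand_sub_left (μ : ℂ) {a b c : ℝ} (hc : a * Real.exp (2 * c) = b) (t : ℝ) :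
    macdonaldIntegrand μ a b (c - t) = Complex.exp (μ * c) * macdonaldIntegrand (-μ) a b t := by
  have hb : b * Real.exp (-(2 * c)) = a := by
    rw [← hc, mul_assoc, ← Real.exp_add, add_neg_cancel, Real.exp_zero, mul_one]
  have ha' : a * Real.exp (2 * (c - t)) = b * Real.exp (-(2 * t)) := by
    rw [← hc, mul_assoc, ← Real.exp_add]; ring_nf
  have hb' : b * Real.exp (-(2 * (c - t))) = a * Real.exp (2 * t) := by
    rw [← hb, mul_assoc, ← Real.exp_add]; ring_nf
  rw [macdonaldIntegrand, macdonaldIntegrand, ← Complex.exp_add, ha', hb']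
  push_cast
  ring_nf

noncomputable def baxterRho (ℓ : ℕ) (j : Fin (ℓ + 1)) : ℂ := (ℓ : ℂ) / 2 + 1 - ((j : ℕ) + 1)

section

variable {ℓ : ℕ}

noncomputable def baxterPotential (x y : Fin (ℓ + 1) → ℝ) : ℝ :=
  ∑ k : Fin ℓ, (Real.exp (2 * (x k.castSucc - y k.castSucc))
      + Real.exp (2 * (y k.succ - x k.castSucc)))
    + Real.exp (2 * (x (Fin.last ℓ) - y (Fin.last ℓ)))

lemma baxterKernel_eq (x y : Fin (ℓ + 1) → ℝ) (s : ℂ) :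
    baxterKernel ℓ x y s = 2 ^ (ℓ + 1) * Complex.exp
      (∑ j, (Complex.I * s - baxterRho ℓ j) * ((x j - y j : ℝ) : ℂ)
        - Real.pi * baxterPotential x y) := by
  simp only [baxterKernel, baxterPotential, baxterRho]
  push_cast
  ring_nf

/-- In `Q(x,z|s) Q(z,y|s')`, the variable `z j` enters through
`- π (baxterCoeffPos x y j * exp (2 z j) + baxterCoeffNeg x y j * exp (-2 z j))`. -/
noncomputable def baxterCoeffNeg (x y : Fin (ℓ + 1) → ℝ) : Fin (ℓ + 1) → ℝ :=
  Fin.lastCases (Real.exp (2 * x (Fin.last ℓ)))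
    fun k => Real.exp (2 * x k.castSucc) + Real.exp (2 * y k.succ)

noncomputable def baxterCoeffPos (x y : Fin (ℓ + 1) → ℝ) : Fin (ℓ + 1) → ℝ :=
  Fin.cases (Real.exp (-(2 * y 0)))
    fun k => Real.exp (-(2 * y k.succ)) + Real.exp (-(2 * x k.castSucc))

lemma baxterCoeffNeg_pos (x y : Fin (ℓ + 1) → ℝ) (j : Fin (ℓ + 1)) :
    0 < baxterCoeffNeg x y j := by
  induction j using Fin.lastCases with
  | last => rw [baxterCoeffNeg, Fin.lastCases_last]; positivity
  | cast k => rw [baxterCoeffNeg, Fin.lastCases_castSucc]; positivity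

lemma baxterCoeffPos_pos (x y : Fin (ℓ + 1) → ℝ) (j : Fin (ℓ + 1)) :
    0 < baxterCoeffPos x y j := by
  induction j using Fin.cases with
  | zero => rw [baxterCoeffPos, Fin.cases_zero]; positivity
  | succ k => rw [baxterCoeffPos, Fin.cases_succ]; positivity

lemma baxterCoeffPos_succ (x y : Fin (ℓ + 1) → ℝ) (k : Fin ℓ) :
    baxterCoeffPos x y k.succ
      = Real.exp (-(2 * (x k.castSucc + y k.succ))) * baxterCoeffNeg x y k.castSucc := by
  rw [baxterCoeffPos, baxterCoeffNeg, Fin.cases_succ, Fin.lastCases_castSucc, mul_add,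
    ← Real.exp_add, ← Real.exp_add]
  ring_nf

lemma baxterPotential_add (x y z : Fin (ℓ + 1) → ℝ) :
    baxterPotential x z + baxterPotential z y
      = ∑ j, (baxterCoeffPos x y j * Real.exp (2 * z j)
          + baxterCoeffNeg x y j * Real.exp (-(2 * z j))) := by
  have hzy : ∑ k : Fin ℓ, Real.exp (2 * (z k.castSucc - y k.castSucc))
        + Real.exp (2 * (z (Fin.last ℓ) - y (Fin.last ℓ)))
      = Real.exp (2 * (z 0 - y 0)) + ∑ k : Fin ℓ, Real.exp (2 * (z k.succ - y k.succ)) := by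
    rw [← Fin.sum_univ_castSucc (fun j => Real.exp (2 * (z j - y j))), Fin.sum_univ_succ]
  have hpos (a b : ℝ) : Real.exp (-(2 * a)) * Real.exp (2 * b) = Real.exp (2 * (b - a)) := by
    rw [← Real.exp_add]; ring_nf
  have hneg (a b : ℝ) : Real.exp (2 * a) * Real.exp (-(2 * b)) = Real.exp (2 * (a - b)) := by
    rw [← Real.exp_add]; ring_nf
  rw [Finset.sum_add_distrib, Fin.sum_univ_succ, Fin.sum_univ_castSucc (fun j => _ * _)]
  simp only [baxterPotential, baxterCoeffPos, baxterCoeffNeg, Fin.cases_zero, Fin.cases_succ,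
    Fin.lastCases_last, Fin.lastCases_castSucc, add_mul, hpos, hneg, Finset.sum_add_distrib]
  linear_combination hzy

noncomputable def baxterPrefactor (s s' : ℂ) (x y : Fin (ℓ + 1) → ℝ) : ℂ :=
  4 ^ (ℓ + 1) * Complex.exp (∑ j, ((Complex.I * s - baxterRho ℓ j) * x j
    - (Complex.I * s' - baxterRho ℓ j) * y j))

lemma baxterKernel_mul_baxterKernel (s s' : ℂ) (x y z : Fin (ℓ + 1) → ℝ) :
    baxterKernel ℓ x z s * baxterKernel ℓ z y s'
      = baxterPrefactor s s' x y * ∏ j, macdonaldIntegrand (Complex.I * (s' - s))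
          (Real.pi * baxterCoeffPos x y j) (Real.pi * baxterCoeffNeg x y j) (z j) := by
  have hpot := congrArg (fun r : ℝ => (Real.pi : ℂ) * r) (baxterPotential_add x y z)
  have hlin : ∑ j, (Complex.I * s - baxterRho ℓ j) * ((x j - z j : ℝ) : ℂ)
        + ∑ j, (Complex.I * s' - baxterRho ℓ j) * ((z j - y j : ℝ) : ℂ)
      = ∑ j, ((Complex.I * s - baxterRho ℓ j) * x j - (Complex.I * s' - baxterRho ℓ j) * y j)
        + ∑ j, Complex.I * (s' - s) * z j := by
    rw [← Finset.sum_add_distrib, ← Finset.sum_add_distrib]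
    refine Finset.sum_congr rfl fun j _ => ?_
    push_cast
    ring
  simp only [baxterKernel_eq, baxterPrefactor, macdonaldIntegrand, ← Complex.exp_sum]
  rw [mul_mul_mul_comm, ← Complex.exp_add, mul_assoc _ (Complex.exp _), ← Complex.exp_add,
    show (2 : ℂ) ^ (ℓ + 1) * 2 ^ (ℓ + 1) = 4 ^ (ℓ + 1) by norm_num [← mul_pow]]
  congr 2
  push_cast at hlin hpot ⊢
  simp only [Finset.sum_sub_distrib, mul_add, Finset.mul_sum, Finset.sum_add_distrib, mul_assoc]
    at hlin hpot ⊢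
  linear_combination hlin - hpot

lemma baxterPrefactor_mul_exp (s s' : ℂ) (x y : Fin (ℓ + 1) → ℝ) :
    baxterPrefactor s s' x y * Complex.exp (Complex.I * (s' - s) * ∑ j, ((x j + y j : ℝ) : ℂ))
      = baxterPrefactor s' s x y := by
  rw [baxterPrefactor, baxterPrefactor, mul_assoc, ← Complex.exp_add, Finset.mul_sum,
    ← Finset.sum_add_distrib]
  congr 2
  refine Finset.sum_congr rfl fun j _ => ?_
  push_cast
  ring

noncomputable def baxterShift (x y : Fin (ℓ + 1) → ℝ) (j : Fin (ℓ + 1)) : ℝ :=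
  Real.log (baxterCoeffNeg x y j / baxterCoeffPos x y j) / 2

lemma mul_exp_two_mul_baxterShift (x y : Fin (ℓ + 1) → ℝ) (j : Fin (ℓ + 1)) :
    Real.pi * baxterCoeffPos x y j * Real.exp (2 * baxterShift x y j)
      = Real.pi * baxterCoeffNeg x y j := by
  have hpos := baxterCoeffPos_pos x y j
  rw [baxterShift, mul_div_cancel₀ _ two_ne_zero,
    Real.exp_log (div_pos (baxterCoeffNeg_pos x y j) hpos)]
  field_simp

lemma sum_baxterShift (x y : Fin (ℓ + 1) → ℝ) :
    ∑ j, baxterShift x y j = ∑ j, (x j + y j) := by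
  have hlog (j : Fin (ℓ + 1)) : baxterShift x y j
      = (Real.log (baxterCoeffNeg x y j) - Real.log (baxterCoeffPos x y j)) / 2 :=
    congrArg (· / 2) (Real.log_div (baxterCoeffNeg_pos x y j).ne' (baxterCoeffPos_pos x y j).ne')
  have hneg : ∑ j, Real.log (baxterCoeffNeg x y j)
      = ∑ k : Fin ℓ, Real.log (baxterCoeffNeg x y k.castSucc) + 2 * x (Fin.last ℓ) := by
    rw [Fin.sum_univ_castSucc, baxterCoeffNeg, Fin.lastCases_last, Real.log_exp]
  have hpos : ∑ j, Real.log (baxterCoeffPos x y j)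
      = -(2 * y 0) + ∑ k : Fin ℓ, (Real.log (baxterCoeffNeg x y k.castSucc)
          - 2 * (x k.castSucc + y k.succ)) := by
    simp only [Fin.sum_univ_succ, baxterCoeffPos_succ,
      Real.log_mul (Real.exp_ne_zero _) (baxterCoeffNeg_pos x y _).ne', Real.log_exp]
    rw [baxterCoeffPos, Fin.cases_zero, Real.log_exp]
    exact congrArg _ (Finset.sum_congr rfl fun k _ => by ring)
  simp only [hlog, ← Finset.sum_div, Finset.sum_sub_distrib, hneg, hpos, Finset.sum_add_distrib,
    Fin.sum_univ_castSucc x, Fin.sum_univ_succ y, mul_add, ← Finset.mul_sum]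
  ring

lemma baxterKernel_mul_baxterKernel_sub_left (s s' : ℂ) (x y z : Fin (ℓ + 1) → ℝ) :
    baxterKernel ℓ x (baxterShift x y - z) s * baxterKernel ℓ (baxterShift x y - z) y s'
      = baxterKernel ℓ x z s' * baxterKernel ℓ z y s := by
  have hμ : -(Complex.I * (s' - s)) = Complex.I * (s - s') := by ring
  simp only [baxterKernel_mul_baxterKernel, Pi.sub_apply,
    macdonaldIntegrand_sub_left _ (mul_exp_two_mul_baxterShift x y _), Finset.prod_mul_distrib,
    ← Complex.exp_sum, ← Finset.mul_sum, hμ, ← mul_assoc]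
  rw [← baxterPrefactor_mul_exp s s' x y, ← Complex.ofReal_sum, sum_baxterShift]
  push_cast
  rfl

lemma integrable_baxterKernel_mul_baxterKernel (s s' : ℂ) (x y : Fin (ℓ + 1) → ℝ) :
    Integrable fun z => baxterKernel ℓ x z s * baxterKernel ℓ z y s' := by
  simp only [baxterKernel_mul_baxterKernel]
  refine (Integrable.fintype_prod fun j => integrable_macdonaldIntegrand _ ?_ ?_).const_mul _
  · exact mul_pos Real.pi_pos (baxterCoeffPos_pos x y j)
  · exact mul_pos Real.pi_pos (baxterCoeffNeg_pos x y j)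

end

theorem baxterKernel_commute (ℓ : ℕ) (s s' : ℂ) (x y : Fin (ℓ+1) → ℝ) :
    Integrable (fun z : Fin (ℓ+1) → ℝ => baxterKernel ℓ x z s * baxterKernel ℓ z y s') ∧
    Integrable (fun z : Fin (ℓ+1) → ℝ => baxterKernel ℓ x z s' * baxterKernel ℓ z y s) ∧
    (∫ z : Fin (ℓ+1) → ℝ, baxterKernel ℓ x z s * baxterKernel ℓ z y s')
      = ∫ z : Fin (ℓ+1) → ℝ, baxterKernel ℓ x z s' * baxterKernel ℓ z y s := by
  refine ⟨integrable_baxterKernel_mul_baxterKernel s s' x y,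
    integrable_baxterKernel_mul_baxterKernel s' s x y, ?_⟩
  rw [← integral_sub_left_eq_self _ volume (baxterShift x y)]
  simp only [baxterKernel_mul_baxterKernel_sub_left]
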